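/- Suppose {D_0,D_1,D_2,D_3} is a symmetric difference family of type H in a finite abelian group G satisfying (d2), and {B_0,...,B_7} is a building family in a finite abelian group G'. Then the eight sets C_0,...,C_7 defined in the Kharaghani-type product construction (e.g., C_0 = D_0×B_0 ∪ D_1×B_1 ∪ D_2^c×B_2 ∪ D_3^c×B_3 ∪ D_0^c×B_4 ∪ D_1^c×B_5 ∪ D_2×B_6 ∪ D_3×B_7 ∪ Ē_0×{0_{G'}}, and C_1,...,C_7 by the analogous unions with the B-indices permuted as in the paper and center blocks Ē_1, Ē_0, Ē_1, E_0, E_1, E_0, E_1 respectively) form a symmetric difference family of type H_8* in G × G': each C_i is symmetric and Σ_{i=0}^{7} C_i² = 4(|G||G'|−1)·0 + 2(|G||G'|−3)·(G×G')* in ℤ[G×G']. -/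

import Mathlib

open Finset

noncomputable section

variable {G : Type*}

/-- The element of the group ring `ℤ[G]` associated to a finite subset `D ⊆ G`. -/
def grp [AddCommGroup G] [DecidableEq G] (D : Finset G) : AddMonoidAlgebra ℤ G :=
  ∑ x ∈ D, AddMonoidAlgebra.single x 1

/-- `D^{(-1)} = {-x : x ∈ D}`. -/
def negSet [AddCommGroup G] [DecidableEq G] (D : Finset G) : Finset G :=
  D.image (fun x => -x)

/-- A subset is symmetric if `D = -D`. -/
def IsSymmetric [AddCommGroup G] [DecidableEq G] (D : Finset G) : Prop :=
  negSet D = D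

/-- `G* = G \ {0}` as a finset. -/
def Gstar (G : Type*) [AddCommGroup G] [Fintype G] [DecidableEq G] : Finset G :=
  Finset.univ \ {0}

/-- A difference family of type `H`: four blocks with `λ = Σ|D_i| - |G|`. -/
def IsTypeH [AddCommGroup G] [Fintype G] [DecidableEq G] (D : Fin 4 → Finset G) : Prop :=
  ∑ i, grp (D i) * grp (negSet (D i)) =
    ((∑ i, ((D i).card : ℤ)) - (Fintype.card G : ℤ)) • grp (Finset.univ : Finset G)
      + (Fintype.card G : ℤ) • AddMonoidAlgebra.single (0 : G) (1 : ℤ)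

/-- A difference family of type `H_4^*`: four blocks with `λ = Σ|B_i| - (|G|+1)`. -/
def IsTypeH4star [AddCommGroup G] [Fintype G] [DecidableEq G] (B : Fin 4 → Finset G) : Prop :=
  ∑ i, grp (B i) * grp (negSet (B i)) =
    ((∑ i, ((B i).card : ℤ)) - ((Fintype.card G : ℤ) + 1)) • grp (Finset.univ : Finset G)
      + ((Fintype.card G : ℤ) + 1) • AddMonoidAlgebra.single (0 : G) (1 : ℤ)

/-- A difference family of type `H_2^*`: two blocks with `λ = Σ|S_i| - (|G|+1)/2`. -/
def IsTypeH2star [AddCommGroup G] [Fintype G] [DecidableEq G] (S : Fin 2 → Finset G) : Prop :=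
  ∑ i, grp (S i) * grp (negSet (S i)) =
    ((∑ i, ((S i).card : ℤ)) - ((Fintype.card G : ℤ) + 1) / 2) • grp (Finset.univ : Finset G)
      + (((Fintype.card G : ℤ) + 1) / 2) • AddMonoidAlgebra.single (0 : G) (1 : ℤ)

/-- Condition (d3). -/
def CondD3 [AddCommGroup G] [Fintype G] [DecidableEq G] (D : Fin 4 → Finset G) : Prop :=
  grp (D 0) * grp (negSet (D 2)) + grp (D 2) * grp (negSet (D 0))
    + grp (D 1) * grp (negSet (D 3)) + grp (D 3) * grp (negSet (D 1)) =
    ((∑ i, ((D i).card : ℤ)) - (Fintype.card G : ℤ) + 1) • grp (Finset.univ : Finset G)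

/-- Condition (c1). -/
def CondC1 [AddCommGroup G] [Fintype G] [DecidableEq G] (S : Fin 4 → Finset G) : Prop :=
  grp (S 0) * grp (negSet (S 2)) + grp (S 2) * grp (negSet (S 0))
    + grp (S 1) * grp (negSet (S 3)) + grp (S 3) * grp (negSet (S 1)) =
    ((∑ i, ((S i).card : ℤ)) - (Fintype.card G : ℤ)) • grp (Finset.univ : Finset G)

/-- Condition (d2). -/
def CondD2 [AddCommGroup G] [Fintype G] [DecidableEq G] (D : Fin 4 → Finset G) : Prop :=
  ∃ E₀ E₁ : Finset G, E₀ ⊆ Gstar G ∧ E₁ ⊆ Gstar G ∧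
    grp (D 0) + grp (D 1) - grp (D 2) - grp (D 3) = grp E₀ - grp (Gstar G \ E₀) ∧
    grp (D 0) + grp (D 3) - grp (D 1) - grp (D 2) = grp E₁ - grp (Gstar G \ E₁) ∧
    IsTypeH4star ![E₀, E₁, Gstar G \ E₀, Gstar G \ E₁]

/-- A building family: eight symmetric, pairwise disjoint subsets partitioning `G*`,
satisfying (a3) and (a4). -/
def IsBuildingFamily [AddCommGroup G] [Fintype G] [DecidableEq G] (A : Fin 8 → Finset G) : Prop :=
  (∀ i, IsSymmetric (A i)) ∧
  (∀ i j, i ≠ j → Disjoint (A i) (A j)) ∧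
  (Finset.univ.biUnion A = Gstar G) ∧
  IsTypeH4star ![A 0 ∪ A 1 ∪ A 6 ∪ A 7, A 2 ∪ A 3 ∪ A 4 ∪ A 5,
    A 0 ∪ A 3 ∪ A 5 ∪ A 6, A 1 ∪ A 2 ∪ A 4 ∪ A 7] ∧
  (∑ i, grp (A i) * grp (A i)) - (∑ i, grp (A i) * grp (A (i + 4))) =
    ((Fintype.card G : ℤ) - 1) • AddMonoidAlgebra.single (0 : G) (1 : ℤ)
      + ((grp (A 0) + grp (A 1) + grp (A 2) + grp (A 3))
        - (grp (A 4) + grp (A 5) + grp (A 6) + grp (A 7)))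

end
/-- The permutation of `B`-indices used in the blocks `C_0, ..., C_7` of the
Kharaghani-type product construction. -/
def bIdx : Fin 8 → Fin 8 → Fin 8 :=
  ![![0, 1, 2, 3, 4, 5, 6, 7], ![1, 4, 3, 6, 5, 0, 7, 2],
    ![2, 3, 0, 1, 6, 7, 4, 5], ![3, 6, 1, 4, 7, 2, 5, 0],
    ![4, 5, 6, 7, 0, 1, 2, 3], ![5, 0, 7, 2, 1, 4, 3, 6],
    ![6, 7, 4, 5, 2, 3, 0, 1], ![7, 2, 5, 0, 3, 6, 1, 4]]

/-!
Everything is done in the `±1` form `2 S - G` of a subset `S` (`G` also standing for the sum of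
all elements of `G`). Put `Xᵢ = 2 Dᵢ - G`, `P = E₀ - Ē₀`, `Q = E₁ - Ē₁` in `ℤ[G]` and `yᵢ = Bᵢ`
in `ℤ[G']`. Complementing a set negates its `±1` form, so `2 C_k - (G × G')*` is the entry
`K_k = ∑ⱼ ±X y + (±P or ±Q)` of an array of Kharaghani type, with `K_{k+4} = -K_k`. In this
language the hypotheses read `∑ Xᵢ² = 4|G|`, `X₀ - X₂ = P + Q`, `X₁ - X₃ = P - Q`,
`P² + Q² = 2(|G| - G)`, and, with `zᵢ = yᵢ - yᵢ₊₄`, `∑ zᵢ² = |G'| - 1 + ∑ zᵢ` and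
`(U₁ - U₂)² + (U₃ - U₄)² = 2(|G'| - G')` for the four unions `Uⱼ` of the building family.
A polynomial identity then gives `∑ K_k² = 8(|G||G'| - G × G')`, the `±1` form of type `H₈*`;
as `ℤ[G × G']` has no additive torsion, the `0/1` form follows after multiplying it by `4`.
-/

section GroupRing

variable {G : Type*} [AddCommGroup G] [DecidableEq G]

theorem mem_negSet {S : Finset G} {a : G} : a ∈ negSet S ↔ -a ∈ S := by
  simp [negSet, neg_eq_iff_eq_neg]

theorem isSymmetric_iff {S : Finset G} : IsSymmetric S ↔ ∀ a, -a ∈ S ↔ a ∈ S := by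
  simp only [IsSymmetric, Finset.ext_iff, mem_negSet]

theorem IsSymmetric.union {S T : Finset G} (hS : IsSymmetric S) (hT : IsSymmetric T) :
    IsSymmetric (S ∪ T) := by
  rw [isSymmetric_iff] at *
  intro a
  simp only [mem_union, hS a, hT a]

theorem IsSymmetric.sdiff {S T : Finset G} (hS : IsSymmetric S) (hT : IsSymmetric T) :
    IsSymmetric (S \ T) := by
  rw [isSymmetric_iff] at *
  intro a
  simp only [mem_sdiff, hS a, hT a]

theorem IsSymmetric.biUnion {ι : Type*} {s : Finset ι} {f : ι → Finset G}
    (hf : ∀ i ∈ s, IsSymmetric (f i)) : IsSymmetric (s.biUnion f) := by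
  rw [isSymmetric_iff]
  intro a
  simp only [mem_biUnion]
  exact exists_congr fun i => and_congr_right fun hi => isSymmetric_iff.mp (hf i hi) a

theorem IsSymmetric.product {G' : Type*} [AddCommGroup G'] [DecidableEq G'] {S : Finset G}
    {T : Finset G'} (hS : IsSymmetric S) (hT : IsSymmetric T) : IsSymmetric (S ×ˢ T) := by
  rw [isSymmetric_iff] at *
  intro a
  simp only [mem_product, Prod.fst_neg, Prod.snd_neg, hS, hT]

theorem isSymmetric_zero : IsSymmetric ({0} : Finset G) := by
  rw [isSymmetric_iff]
  simp

theorem grp_mul_negSet {S : Finset G} (hS : IsSymmetric S) :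
    grp S * grp (negSet S) = grp S * grp S := by
  rw [hS]

theorem grp_union {S T : Finset G} (h : Disjoint S T) : grp (S ∪ T) = grp S + grp T :=
  sum_union h

theorem grp_sdiff {S T : Finset G} (h : T ⊆ S) : grp (S \ T) = grp S - grp T :=
  sum_sdiff_eq_sub h

theorem grp_biUnion {ι : Type*} {s : Finset ι} {f : ι → Finset G}
    (h : (s : Set ι).PairwiseDisjoint f) : grp (s.biUnion f) = ∑ i ∈ s, grp (f i) :=
  sum_biUnion h

theorem grp_singleton_zero : grp ({0} : Finset G) = 1 := by
  rw [grp, sum_singleton, AddMonoidAlgebra.one_def]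

variable [Fintype G]

theorem IsSymmetric.compl {S : Finset G} (hS : IsSymmetric S) : IsSymmetric Sᶜ := by
  rw [isSymmetric_iff] at *
  intro a
  simp only [mem_compl, hS a]

theorem isSymmetric_Gstar : IsSymmetric (Gstar G) := by
  rw [isSymmetric_iff]
  simp [Gstar]

theorem grp_Gstar : grp (Gstar G) = grp (univ : Finset G) - 1 := by
  rw [Gstar, grp_sdiff (subset_univ _), grp_singleton_zero]

theorem grp_compl (S : Finset G) : grp Sᶜ = grp (univ : Finset G) - grp S := by
  rw [compl_eq_univ_sdiff, grp_sdiff (subset_univ S)]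

theorem grp_univ_mul (S : Finset G) :
    grp (univ : Finset G) * grp S = (#S : AddMonoidAlgebra ℤ G) * grp univ := by
  have single_mul (x : G) : grp (univ : Finset G) * AddMonoidAlgebra.single x 1 = grp univ := by
    simp only [grp, sum_mul, AddMonoidAlgebra.single_mul_single, mul_one]
    exact Fintype.sum_equiv (Equiv.addRight x) _ _ fun _ => rfl
  calc grp univ * grp S = ∑ x ∈ S, grp univ * AddMonoidAlgebra.single x 1 := mul_sum _ _ _
    _ = (#S : AddMonoidAlgebra ℤ G) * grp univ := by
      rw [sum_congr rfl fun x _ => single_mul x, sum_const, nsmul_eq_mul]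

end GroupRing

section PlusMinusForm

variable {G : Type*} [AddCommGroup G] [Fintype G] [DecidableEq G]

theorem IsTypeH.sum_sq_two_mul_grp_sub {D : Fin 4 → Finset G} (hH : IsTypeH D)
    (hsym : ∀ i, IsSymmetric (D i)) :
    ∑ i, (2 * grp (D i) - grp univ) ^ 2 = 4 * (Fintype.card G : AddMonoidAlgebra ℤ G) := by
  have hu := grp_univ_mul (univ : Finset G)
  have hd := fun i => grp_univ_mul (D i)
  simp only [IsTypeH, grp_mul_negSet (hsym _), Fin.sum_univ_four, zsmul_eq_mul,
    ← AddMonoidAlgebra.one_def] at hH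
  simp only [Fin.sum_univ_four, card_univ] at hu ⊢
  push_cast at hH
  linear_combination 4 * hH - 4 * (hd 0 + hd 1 + hd 2 + hd 3) + 4 * hu

theorem IsTypeH4star.sq_sub_add_sq_sub {S : Fin 4 → Finset G} (h : IsTypeH4star S)
    (hsym : ∀ i, IsSymmetric (S i)) (h02 : Disjoint (S 0) (S 2)) (h02' : S 0 ∪ S 2 = Gstar G)
    (h13 : Disjoint (S 1) (S 3)) (h13' : S 1 ∪ S 3 = Gstar G) :
    (grp (S 0) - grp (S 2)) ^ 2 + (grp (S 1) - grp (S 3)) ^ 2 =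
      2 * ((Fintype.card G : AddMonoidAlgebra ℤ G) - grp univ) := by
  have hu := grp_univ_mul (univ : Finset G)
  have card_pair {i j : Fin 4} (hij : Disjoint (S i) (S j)) (hij' : S i ∪ S j = Gstar G) :
      (#(S i) + #(S j) + 1 : AddMonoidAlgebra ℤ G) = Fintype.card G := by
    rw [← Nat.cast_add, ← card_union_of_disjoint hij, hij', Gstar, card_sdiff_of_subset (by simp),
      card_univ, card_singleton, Nat.cast_sub Fintype.card_pos, Nat.cast_one, sub_add_cancel]
  have grp_pair {i j : Fin 4} (hij : Disjoint (S i) (S j)) (hij' : S i ∪ S j = Gstar G) :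
      grp (S i) + grp (S j) = grp univ - 1 := by
    rw [← grp_union hij, hij', grp_Gstar]
  simp only [IsTypeH4star, grp_mul_negSet (hsym _), Fin.sum_univ_four, zsmul_eq_mul,
    ← AddMonoidAlgebra.one_def] at h
  simp only [card_univ] at hu
  push_cast at h
  linear_combination 2 * h - 2 * hu + 2 * grp univ * (card_pair h02 h02' + card_pair h13 h13')
    - (grp (S 0) + grp (S 2) + grp univ - 1) * grp_pair h02 h02'
    - (grp (S 1) + grp (S 3) + grp univ - 1) * grp_pair h13 h13'

end PlusMinusForm

section BuildingFamily

variable {G : Type*} [AddCommGroup G] [Fintype G] [DecidableEq G] {A : Fin 8 → Finset G}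

theorem IsBuildingFamily.sq_sub_add_sq_sub (hA : IsBuildingFamily A) :
    (grp (A 0) + grp (A 1) + grp (A 6) + grp (A 7)
        - (grp (A 2) + grp (A 3) + grp (A 4) + grp (A 5))) ^ 2
      + (grp (A 0) + grp (A 3) + grp (A 5) + grp (A 6)
        - (grp (A 1) + grp (A 2) + grp (A 4) + grp (A 7))) ^ 2
      = 2 * ((Fintype.card G : AddMonoidAlgebra ℤ G) - grp univ) := by
  obtain ⟨hsym, hdisj, hpart, h4, -⟩ := hA
  have union_eq (i j k l : Fin 8) :
      A i ∪ A j ∪ A k ∪ A l = ({i, j, k, l} : Finset (Fin 8)).biUnion A := by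
    simp only [biUnion_insert, singleton_biUnion, union_assoc]
  have hdisj' : (Set.univ : Set (Fin 8)).PairwiseDisjoint A := fun i _ j _ hij => hdisj i j hij
  have grp_eq (s : Finset (Fin 8)) : grp (s.biUnion A) = ∑ i ∈ s, grp (A i) :=
    grp_biUnion (hdisj'.subset (Set.subset_univ _))
  have compl_pair {s t : Finset (Fin 8)} (hst : Disjoint s t) (hst' : s ∪ t = univ) :
      Disjoint (s.biUnion A) (t.biUnion A) ∧ s.biUnion A ∪ t.biUnion A = Gstar G := by
    refine ⟨?_, by rw [← union_biUnion, hst', hpart]⟩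
    rw [disjoint_biUnion_left]
    intro i hi
    rw [disjoint_biUnion_right]
    intro j hj
    exact hdisj i j fun hij => disjoint_left.mp hst hi (hij ▸ hj)
  -- (a3) reordered so that complementary unions sit at positions `0, 2` and `1, 3`.
  have h4' : IsTypeH4star ![({0, 1, 6, 7} : Finset (Fin 8)).biUnion A,
      ({0, 3, 5, 6} : Finset _).biUnion A, ({2, 3, 4, 5} : Finset _).biUnion A,
      ({1, 2, 4, 7} : Finset _).biUnion A] := by
    simp only [IsTypeH4star, union_eq, Fin.sum_univ_four] at h4 ⊢
    simp only [Matrix.cons_val] at h4 ⊢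
    linear_combination h4
  have := h4'.sq_sub_add_sq_sub
    (fun i => by fin_cases i <;> exact IsSymmetric.biUnion fun j _ => hsym j)
    (compl_pair (by decide) (by decide)).1 (compl_pair (by decide) (by decide)).2
    (compl_pair (by decide) (by decide)).1 (compl_pair (by decide) (by decide)).2
  simp only [Matrix.cons_val, grp_eq] at this
  repeat rw [sum_insert (by decide)] at this
  simp only [sum_singleton] at this
  linear_combination this

end BuildingFamily

section Product

variable (G H : Type*) [AddCommGroup G] [AddCommGroup H]

noncomputable def inlRingHom : AddMonoidAlgebra ℤ G →+* AddMonoidAlgebra ℤ (G × H) :=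
  AddMonoidAlgebra.mapDomainRingHom ℤ (AddMonoidHom.inl G H)

noncomputable def inrRingHom : AddMonoidAlgebra ℤ H →+* AddMonoidAlgebra ℤ (G × H) :=
  AddMonoidAlgebra.mapDomainRingHom ℤ (AddMonoidHom.inr G H)

variable {G H} [DecidableEq G] [DecidableEq H]

theorem grp_product (S : Finset G) (T : Finset H) :
    grp (S ×ˢ T) = inlRingHom G H (grp S) * inrRingHom G H (grp T) := by
  simp only [grp, map_sum, inlRingHom, inrRingHom, AddMonoidAlgebra.mapDomainRingHom_apply,
    AddMonoidAlgebra.mapDomain_single, sum_mul_sum, AddMonoidAlgebra.single_mul_single,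
    AddMonoidHom.inl_apply, AddMonoidHom.inr_apply, Prod.mk_add_mk, add_zero, zero_add, mul_one,
    sum_product]

variable [Fintype G] [Fintype H]

theorem grp_univ_prod :
    grp (univ : Finset (G × H)) = inlRingHom G H (grp univ) * inrRingHom G H (grp univ) := by
  rw [← univ_product_univ, grp_product]

theorem two_mul_grp_blocks_sub {ι κ : Type*} [Fintype ι] [Fintype κ] (F : ι → Finset G)
    (c : Finset G) {π : ι → κ} (hπ : π.Bijective) {B : κ → Finset H}
    (hdisj : ∀ i j, i ≠ j → Disjoint (B i) (B j)) (hpart : univ.biUnion B = Gstar H) :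
    2 * grp ((univ.biUnion fun j => F j ×ˢ B (π j)) ∪ c ×ˢ {0}) - (grp univ - 1) =
      ∑ j, inlRingHom G H (2 * grp (F j) - grp univ) * inrRingHom G H (grp (B (π j)))
        + inlRingHom G H (2 * grp c - (grp univ - 1)) := by
  have zero_notMem (i : κ) : (0 : H) ∉ B i := fun h => by
    have := hpart ▸ mem_biUnion.2 ⟨i, mem_univ _, h⟩
    simp [Gstar] at this
  have hsum : ∑ j, grp (B (π j)) = grp univ - 1 := by
    rw [hπ.sum_comp (fun i => grp (B i)), ← grp_biUnion fun i _ j _ hij => hdisj i j hij, hpart,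
      grp_Gstar]
  have hdisj_blocks : Disjoint ((univ : Finset ι).biUnion fun j => F j ×ˢ B (π j)) (c ×ˢ {0}) :=
    (disjoint_biUnion_left _ _ _).2 fun j _ =>
      disjoint_product.2 (Or.inr (disjoint_singleton_right.2 (zero_notMem _)))
  rw [grp_union hdisj_blocks,
    grp_biUnion fun i _ j _ hij => disjoint_product.2 (Or.inr (hdisj _ _ (hπ.1.ne hij))),
    grp_product, grp_singleton_zero, map_one, mul_one, grp_univ_prod,
    ← sub_add_cancel (grp (univ : Finset H)) 1, ← hsum]
  simp only [grp_product, map_sub, map_mul, map_add, map_sum, map_one, map_ofNat, sub_mul,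
    sum_sub_distrib, mul_add, mul_one, mul_sum, mul_assoc]
  ring

end Product

section KharaghaniArray

variable {R : Type*} [CommRing R]

def kharaghaniBlock (X : Fin 4 → R) (P Q : R) (y : Fin 8 → R) (k : Fin 8) : R :=
  ∑ j, ![X 0, X 1, -X 2, -X 3, -X 0, -X 1, X 2, X 3] j * y (bIdx k j)
    + ![-P, -Q, -P, -Q, P, Q, P, Q] k

theorem sum_kharaghaniBlock (X : Fin 4 → R) (P Q : R) (y : Fin 8 → R) :
    ∑ k, kharaghaniBlock X P Q y k = 0 := by
  simp only [kharaghaniBlock, Fin.sum_univ_eight, bIdx, Matrix.cons_val]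
  ring

theorem sum_sq_kharaghaniBlock {X : Fin 4 → R} {P Q u t v w : R} {y : Fin 8 → R}
    (hX : ∑ i, X i ^ 2 = 4 * v) (hXP : X 0 - X 2 = P + Q) (hXQ : X 1 - X 3 = P - Q)
    (hPQ : P ^ 2 + Q ^ 2 = 2 * (v - u))
    (hy : ∑ i, y i * y i - ∑ i, y i * y (i + 4) =
      (w - 1) + ((y 0 + y 1 + y 2 + y 3) - (y 4 + y 5 + y 6 + y 7)))
    (hyU : (y 0 + y 1 + y 6 + y 7 - (y 2 + y 3 + y 4 + y 5)) ^ 2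
      + (y 0 + y 3 + y 5 + y 6 - (y 1 + y 2 + y 4 + y 7)) ^ 2 = 2 * (w - t)) :
    ∑ k, kharaghaniBlock X P Q y k ^ 2 = 8 * (v * w - u * t) := by
  simp only [kharaghaniBlock, Fin.sum_univ_eight, Fin.sum_univ_four, bIdx, Matrix.cons_val,
    Fin.reduceAdd] at hX hy ⊢
  set z₀ := y 0 - y 4
  set z₁ := y 1 - y 5
  set z₂ := y 2 - y 6
  set z₃ := y 3 - y 7
  -- Writing `K k` for the `k`-th block: `K (k + 4) = -K k`, and the cross terms of
  -- `∑_{k<4} K k ^ 2` add up to `-4 (X₀X₂ + X₁X₃)(z₀z₂ + z₁z₃)`; the hypotheses on `X, P, Q`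
  -- give `X₀X₂ + X₁X₃ = 2u`, while `hy` and `hyU` give `4 (z₀z₂ + z₁z₃) = 2 ∑ zᵢ + 2t - 2`.
  linear_combination ((z₀ + z₁ - z₂ - z₃) ^ 2 + (z₀ - z₁ - z₂ + z₃) ^ 2) * hX
    + 4 * u * hyU + 8 * (v - u) * hy
    + (8 * (z₀ * z₂ + z₁ * z₃) - 4 * (z₀ + z₁ + z₂ + z₃) + 4) * hPQ
    + (4 * (z₀ * z₂ + z₁ * z₃) * (X 0 - X 2 + P + Q) - 4 * P * (z₀ + z₂) - 4 * Q * (z₁ + z₃))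
      * hXP
    + (4 * (z₀ * z₂ + z₁ * z₃) * (X 1 - X 3 + P - Q) + 4 * Q * (z₀ + z₂) - 4 * P * (z₁ + z₃))
      * hXQ

end KharaghaniArray

section PlusMinusToZeroOne

variable {H : Type*} [AddCommGroup H]

theorem AddMonoidAlgebra.int_smul_injective {n : ℤ} (hn : n ≠ 0) :
    Function.Injective fun a : AddMonoidAlgebra ℤ H => n • a := fun a b h =>
  AddMonoidAlgebra.coeff_injective <| smul_right_injective _ hn <| by
    simpa only [AddMonoidAlgebra.coeff_smul] using congrArg AddMonoidAlgebra.coeff h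

variable [Fintype H] [DecidableEq H]

theorem sum_mul_self_of_sum_sq_two_mul_sub {c : Fin 8 → AddMonoidAlgebra ℤ H}
    (hsum : ∑ k, (2 * c k - (grp univ - 1)) = 0)
    (hsq : ∑ k, (2 * c k - (grp univ - 1)) ^ 2 =
      8 * ((Fintype.card H : AddMonoidAlgebra ℤ H) - grp univ)) :
    ∑ k, c k * c k = (4 * ((Fintype.card H : ℤ) - 1)) • AddMonoidAlgebra.single 0 1
      + (2 * ((Fintype.card H : ℤ) - 3)) • grp (Gstar H) := by
  have hU := grp_univ_mul (univ : Finset H)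
  rw [card_univ] at hU
  apply AddMonoidAlgebra.int_smul_injective (by norm_num : (4 : ℤ) ≠ 0)
  simp only [Fin.sum_univ_eight, zsmul_eq_mul, grp_Gstar, ← AddMonoidAlgebra.one_def] at hsum hsq ⊢
  push_cast
  linear_combination hsq + 2 * (grp univ - 1) * hsum + 8 * hU

end PlusMinusToZeroOne

section ProductConstruction

variable {G G' : Type*} [AddCommGroup G] [Fintype G] [DecidableEq G]
  [AddCommGroup G'] [Fintype G'] [DecidableEq G']

theorem bIdx_bijective (k : Fin 8) : (bIdx k).Bijective := by
  revert k
  decide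

noncomputable def kharaghaniProductBlock (D : Fin 4 → Finset G) (E₀ E₁ : Finset G)
    (B : Fin 8 → Finset G') (k : Fin 8) : AddMonoidAlgebra ℤ (G × G') :=
  kharaghaniBlock (fun i => inlRingHom G G' (2 * grp (D i) - grp univ))
    (inlRingHom G G' (grp E₀ - grp (Gstar G \ E₀)))
    (inlRingHom G G' (grp E₁ - grp (Gstar G \ E₁)))
    (fun i => inrRingHom G G' (grp (B i))) k

theorem two_mul_grp_kharaghani_sub (D : Fin 4 → Finset G) {E₀ E₁ : Finset G}
    (hE₀ : E₀ ⊆ Gstar G) (hE₁ : E₁ ⊆ Gstar G) {B : Fin 8 → Finset G'} (hB : IsBuildingFamily B)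
    (k : Fin 8) :
    2 * grp ((univ.biUnion fun j : Fin 8 =>
          ((![D 0, D 1, (D 2)ᶜ, (D 3)ᶜ, (D 0)ᶜ, (D 1)ᶜ, D 2, D 3]) j) ×ˢ B (bIdx k j))
        ∪ ((![Gstar G \ E₀, Gstar G \ E₁, Gstar G \ E₀, Gstar G \ E₁, E₀, E₁, E₀, E₁]) k)
            ×ˢ ({0} : Finset G')) - (grp univ - 1) =
      kharaghaniProductBlock D E₀ E₁ B k := by
  rw [two_mul_grp_blocks_sub _ _ (bIdx_bijective k) hB.2.1 hB.2.2.1, kharaghaniProductBlock,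
    kharaghaniBlock]
  refine congrArg₂ (· + ·) (sum_congr rfl fun j _ => congrArg (· * _) ?_) ?_
  · fin_cases j
    all_goals simp only [Fin.reduceFinMk, Matrix.cons_val]
    all_goals rw [← map_neg, grp_compl]; exact congrArg _ (by ring)
  · fin_cases k
    all_goals simp only [Fin.reduceFinMk, Matrix.cons_val, ← map_neg]
    all_goals exact congrArg _ (by simp only [grp_sdiff hE₀, grp_sdiff hE₁, grp_Gstar]; ring)

theorem sum_sq_kharaghaniProductBlock {D : Fin 4 → Finset G} {E₀ E₁ : Finset G}
    (hsym : ∀ i, IsSymmetric (D i)) (hH : IsTypeH D)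
    (hE₀s : IsSymmetric E₀) (hE₁s : IsSymmetric E₁)
    (hE₀ : E₀ ⊆ Gstar G) (hE₁ : E₁ ⊆ Gstar G)
    (h1 : grp (D 0) + grp (D 1) - grp (D 2) - grp (D 3) = grp E₀ - grp (Gstar G \ E₀))
    (h2 : grp (D 0) + grp (D 3) - grp (D 1) - grp (D 2) = grp E₁ - grp (Gstar G \ E₁))
    (h3 : IsTypeH4star ![E₀, E₁, Gstar G \ E₀, Gstar G \ E₁])
    {B : Fin 8 → Finset G'} (hB : IsBuildingFamily B) :
    ∑ k, kharaghaniProductBlock D E₀ E₁ B k ^ 2 =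
      8 * ((Fintype.card (G × G') : AddMonoidAlgebra ℤ (G × G')) - grp univ) := by
  rw [grp_univ_prod, Fintype.card_prod, Nat.cast_mul]
  refine sum_sq_kharaghaniBlock ?_ ?_ ?_ ?_ ?_ ?_
  · simpa only [map_sum, map_pow, map_mul, map_ofNat, map_natCast]
      using congrArg (inlRingHom G G') (hH.sum_sq_two_mul_grp_sub hsym)
  · simp only [← map_sub, ← map_add]
    exact congrArg _ (by linear_combination h1 + h2)
  · simp only [← map_sub]
    exact congrArg _ (by linear_combination h1 - h2)
  · have hsymE (i : Fin 4) : IsSymmetric (![E₀, E₁, Gstar G \ E₀, Gstar G \ E₁] i) := by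
      fin_cases i
      exacts [hE₀s, hE₁s, isSymmetric_Gstar.sdiff hE₀s, isSymmetric_Gstar.sdiff hE₁s]
    have := h3.sq_sub_add_sq_sub hsymE disjoint_sdiff (union_sdiff_of_subset hE₀) disjoint_sdiff
      (union_sdiff_of_subset hE₁)
    simp only [Matrix.cons_val] at this
    rw [← map_pow, ← map_pow, ← map_add, this, map_mul, map_ofNat, map_sub, map_natCast]
  · simpa only [map_sub, map_add, map_sum, map_mul, ← AddMonoidAlgebra.one_def, map_one,
      map_natCast, zsmul_eq_mul, Int.cast_sub, Int.cast_natCast, Int.cast_one, mul_one]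
      using congrArg (inrRingHom G G') hB.2.2.2.2
  · simpa only [map_sub, map_add, map_pow, map_mul, map_ofNat, map_natCast]
      using congrArg (inrRingHom G G') hB.sq_sub_add_sq_sub

end ProductConstruction

/-- the Kharaghani-type product construction gives a symmetric difference
family of type `H_8^*` in `G × G'`. -/
theorem kharaghani_product_H8star {G G' : Type*}
    [AddCommGroup G] [Fintype G] [DecidableEq G]
    [AddCommGroup G'] [Fintype G'] [DecidableEq G']
    (D : Fin 4 → Finset G) (E₀ E₁ : Finset G)
    (hsym : ∀ i, IsSymmetric (D i)) (hH : IsTypeH D)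
    (hE₀s : IsSymmetric E₀) (hE₁s : IsSymmetric E₁)
    (hE₀ : E₀ ⊆ Gstar G) (hE₁ : E₁ ⊆ Gstar G)
    (h1 : grp (D 0) + grp (D 1) - grp (D 2) - grp (D 3) = grp E₀ - grp (Gstar G \ E₀))
    (h2 : grp (D 0) + grp (D 3) - grp (D 1) - grp (D 2) = grp E₁ - grp (Gstar G \ E₁))
    (h3 : IsTypeH4star ![E₀, E₁, Gstar G \ E₀, Gstar G \ E₁])
    (B : Fin 8 → Finset G') (hB : IsBuildingFamily B)
    (C : Fin 8 → Finset (G × G'))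
    (hC : ∀ k, C k =
      (Finset.univ.biUnion fun j : Fin 8 =>
          ((![D 0, D 1, (D 2)ᶜ, (D 3)ᶜ, (D 0)ᶜ, (D 1)ᶜ, D 2, D 3]) j) ×ˢ B (bIdx k j))
        ∪ ((![Gstar G \ E₀, Gstar G \ E₁, Gstar G \ E₀, Gstar G \ E₁, E₀, E₁, E₀, E₁]) k)
            ×ˢ ({0} : Finset G')) :
    (∀ k, IsSymmetric (C k)) ∧
      ∑ k, grp (C k) * grp (C k) =
        (4 * ((Fintype.card G : ℤ) * (Fintype.card G' : ℤ) - 1)) •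
            AddMonoidAlgebra.single (0 : G × G') (1 : ℤ)
          + (2 * ((Fintype.card G : ℤ) * (Fintype.card G' : ℤ) - 3)) •
              grp (Gstar (G × G')) := by
  have hEc₀ : IsSymmetric (Gstar G \ E₀) := isSymmetric_Gstar.sdiff hE₀s
  have hEc₁ : IsSymmetric (Gstar G \ E₁) := isSymmetric_Gstar.sdiff hE₁s
  refine ⟨fun k => hC k ▸ (IsSymmetric.biUnion fun j _ => IsSymmetric.product ?_ (hB.1 _)).union
    (IsSymmetric.product ?_ isSymmetric_zero), ?_⟩
  · fin_cases j <;> simp only [Fin.reduceFinMk, Matrix.cons_val] <;>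
      first | exact hsym _ | exact (hsym _).compl
  · fin_cases k <;> assumption
  have hblock (k : Fin 8) : 2 * grp (C k) - (grp univ - 1) = kharaghaniProductBlock D E₀ E₁ B k :=
    hC k ▸ two_mul_grp_kharaghani_sub D hE₀ hE₁ hB k
  have := sum_mul_self_of_sum_sq_two_mul_sub (c := fun k => grp (C k))
    (by simp_rw [hblock]; exact sum_kharaghaniBlock _ _ _ _)
    (by simp_rw [hblock]
        exact sum_sq_kharaghaniProductBlock hsym hH hE₀s hE₁s hE₀ hE₁ h1 h2 h3 hB)
  rwa [Fintype.card_prod, Nat.cast_mul] at this
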